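/- Let 𝔤 = 𝔤_{4.7} be the 4-dimensional real Lie algebra with basis e₁,...,e₄ and nonzero brackets [e₁,e₄] = 2e₁, [e₂,e₄] = e₂, [e₃,e₄] = e₂ + e₃, [e₂,e₃] = e₁. A 4×4 real matrix R equals η·Id + D for some η ∈ ℝ and some derivation D of 𝔤 if and only if R₂₁ = R₃₁ = R₄₁ = 0, R₃₂ = R₄₂ = R₄₃ = 0, R₃₄ = −R₁₂, R₂₄ = R₁₃ − R₁₂, R₃₃ = R₂₂, and R₄₄ = R₂₂ + R₃₃ − R₁₁. In this case η = R₄₄. -/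

import Mathlib

/-! Both sides of the derivation identity are bilinear, so it suffices to test it on the basis
pairs `(eᵢ, e₄)` and `(e₂, e₃)`; this turns `IsDer D` into eleven linear conditions on the entries
of `D`. Among them `D₄₄ = 0` (the `e₁`-component of `D[e₁, e₄] = 2 D e₁`), so if `R = η Id + D`
then necessarily `η = R₄₄`, and conversely `D := R - R₄₄ Id` is a derivation exactly when `R`
satisfies the stated conditions. -/

open Matrix

/-- The Lie bracket of the Lie algebra, in coordinates. -/
def br (x y : Fin 4 → ℝ) : Fin 4 → ℝ :=
  ![2 * (x 0 * y 3 - x 3 * y 0) + (x 1 * y 2 - x 2 * y 1), (x 1 * y 3 - x 3 * y 1) + (x 2 * y 3 - x 3 * y 2), (x 2 * y 3 - x 3 * y 2), (0:ℝ)]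

/-- `D` (acting via `mulVec`) is a derivation of the bracket. -/
def IsDer (D : Matrix (Fin 4) (Fin 4) ℝ) : Prop :=
  ∀ x y : Fin 4 → ℝ, D.mulVec (br x y) = br (D.mulVec x) y + br x (D.mulVec y)

lemma isDer_iff (D : Matrix (Fin 4) (Fin 4) ℝ) :
    IsDer D ↔ (D 1 0 = 0 ∧ D 2 0 = 0 ∧ D 3 0 = 0 ∧ D 2 1 = 0 ∧ D 3 1 = 0 ∧ D 3 2 = 0 ∧
      D 3 3 = 0 ∧ D 2 3 = -D 0 1 ∧ D 1 3 = D 0 2 - D 0 1 ∧ D 2 2 = D 1 1 ∧ D 0 0 = 2 * D 1 1) := by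
  constructor
  · intro h
    have h₁₄ := h ![1, 0, 0, 0] ![0, 0, 0, 1]
    have h₂₄ := h ![0, 1, 0, 0] ![0, 0, 0, 1]
    have h₃₄ := h ![0, 0, 1, 0] ![0, 0, 0, 1]
    have h₂₃ := h ![0, 1, 0, 0] ![0, 0, 1, 0]
    simp [funext_iff, Fin.forall_fin_succ, br, mulVec, dotProduct, Fin.sum_univ_four]
      at h₁₄ h₂₄ h₃₄ h₂₃
    grind
  · rintro ⟨_, _, _, _, _, _, _, _, _, _, _⟩ x y
    ext i
    fin_cases i <;> simp [br, mulVec, dotProduct, Fin.sum_univ_four, *] <;> ring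

lemma IsDer.apply_three_three {D : Matrix (Fin 4) (Fin 4) ℝ} (hD : IsDer D) : D 3 3 = 0 := by
  obtain ⟨-, -, -, -, -, -, h, -⟩ := (isDer_iff D).1 hD
  exact h

theorem stmt_17 (R : Matrix (Fin 4) (Fin 4) ℝ) :
    ((∃ (η : ℝ) (D : Matrix (Fin 4) (Fin 4) ℝ), IsDer D ∧
        R = η • (1 : Matrix (Fin 4) (Fin 4) ℝ) + D) ↔
      (R 1 0 = 0 ∧ R 2 0 = 0 ∧ R 3 0 = 0 ∧ R 2 1 = 0 ∧ R 3 1 = 0 ∧ R 3 2 = 0 ∧ R 2 3 = -R 0 1 ∧ R 1 3 = R 0 2 - R 0 1 ∧ R 2 2 = R 1 1 ∧ R 3 3 = R 1 1 + R 2 2 - R 0 0)) ∧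
    (∀ (η : ℝ) (D : Matrix (Fin 4) (Fin 4) ℝ), IsDer D →
      R = η • (1 : Matrix (Fin 4) (Fin 4) ℝ) + D → η = R 3 3) := by
  refine ⟨⟨?_, fun hR => ⟨R 3 3, R - R 3 3 • 1, ?_, by abel⟩⟩, ?_⟩
  · rintro ⟨η, D, hD, rfl⟩
    rw [isDer_iff] at hD
    simp only [Matrix.add_apply, Matrix.smul_apply, one_apply, smul_eq_mul]
    grind
  · rw [isDer_iff]
    simp only [Matrix.sub_apply, Matrix.smul_apply, one_apply, smul_eq_mul]
    grind
  · rintro η D hD rfl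
    simp [hD.apply_three_three]
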